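/- For every odd positive integer k, there exists a polynomial f in one variable with rational coefficients such that S_k(n) = f(S_1(n)) for every natural number n (Faulhaber's conjecture, proved by Jacobi). -/
import Mathlib


/-- `S k n = ∑_{m=1}^n m^k` as a rational number. -/
def S (k n : ℕ) : ℚ := ∑ m ∈ Finset.Icc 1 n, (m : ℚ) ^ k

open Polynomial Finset

/-- Two rational polynomials agreeing on all naturals are equal. -/
lemma eq_of_nat_eval {p q : ℚ[X]} (h : ∀ n : ℕ, p.eval (n : ℚ) = q.eval (n : ℚ)) :
    p = q := by
  have hinf : (Set.range ((↑) : ℕ → ℚ)).Infinite :=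
    Set.infinite_range_of_injective Nat.cast_injective
  have hroots : {x | (p - q).IsRoot x}.Infinite := by
    refine hinf.mono ?_
    rintro x ⟨n, rfl⟩
    simp [Polynomial.IsRoot, h n]
  have := Polynomial.eq_zero_of_infinite_isRoot _ hroots
  exact sub_eq_zero.mp this

lemma coeff_comp_neg (Q : ℚ[X]) (n : ℕ) :
    (Q.comp (-X)).coeff n = (-1) ^ n * Q.coeff n := by
  induction Q using Polynomial.induction_on' with
  | add p q hp hq => simp [add_comp, hp, hq]; ring
  | monomial m a =>
    have hc : (monomial m a).comp (-X) = C ((-1) ^ m * a) * X ^ m := by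
      rw [monomial_comp, neg_pow, show ((-1 : ℚ[X]) ^ m) = C ((-1 : ℚ) ^ m) by simp,
        ← mul_assoc, ← C_mul, mul_comm a]
    rw [hc, coeff_C_mul, coeff_X_pow, coeff_monomial]
    rcases eq_or_ne m n with rfl | hmn
    · simp
    · simp [hmn, Ne.symm hmn]

/-- An even polynomial is a polynomial in `X ^ 2`. -/
lemma exists_comp_sq (Q : ℚ[X]) (h : Q.comp (-X) = Q) :
    ∃ R : ℚ[X], Q = R.comp (X ^ 2) := by
  have hodd : ∀ n, Odd n → Q.coeff n = 0 := by
    intro n hn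
    have h1 := coeff_comp_neg Q n
    rw [h, hn.neg_one_pow, neg_one_mul] at h1
    linarith
  refine ⟨∑ n ∈ Q.support, monomial (n / 2) (Q.coeff n), ?_⟩
  rw [comp_eq_aeval, map_sum]
  conv_lhs => rw [Q.as_sum_support]
  refine Finset.sum_congr rfl fun n hn => ?_
  have heven : Even n := by
    by_contra hne
    exact (Polynomial.mem_support_iff.mp hn) (hodd n (Nat.not_even_iff_odd.mp hne))
  have h2 : 2 * (n / 2) = n := Nat.two_mul_div_two_of_even heven
  rw [← comp_eq_aeval, monomial_comp, ← pow_mul, h2, C_mul_X_pow_eq_monomial]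

lemma S_succ (k n : ℕ) : S k (n + 1) = S k n + ((n : ℚ) + 1) ^ k := by
  unfold S
  rw [Finset.sum_Icc_succ_top (by omega : 1 ≤ n + 1)]
  push_cast
  ring

lemma S_eq_range (k : ℕ) (hk : 0 < k) (n : ℕ) :
    S k n = ∑ m ∈ Finset.range (n + 1), (m : ℚ) ^ k := by
  induction n with
  | zero => simp [S, zero_pow hk.ne']
  | succ n ih => rw [S_succ, Finset.sum_range_succ, ih]; push_cast; ring

lemma S_one (n : ℕ) : S 1 n = n * (n + 1) / 2 := by
  induction n with
  | zero => simp [S]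
  | succ n ih => rw [S_succ, ih]; push_cast; ring

theorem faulhaber_odd (k : ℕ) (hk : 0 < k) (hodd : Odd k) :
    ∃ f : Polynomial ℚ, ∀ n : ℕ, S k n = f.eval (S 1 n) := by
  -- the polynomial giving the power sum
  obtain ⟨P, hP⟩ : ∃ P : ℚ[X], ∀ n : ℕ, P.eval (n : ℚ) = S k n := by
    refine ⟨(∑ i ∈ Finset.range (k + 1),
      C (_root_.bernoulli i * ((k + 1).choose i) / (k + 1)) * X ^ (k + 1 - i)).comp (X + 1),
      fun n => ?_⟩
    rw [eval_comp]
    simp only [eval_add, eval_X, eval_one]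
    rw [show (n : ℚ) + 1 = ((n + 1 : ℕ) : ℚ) by push_cast; ring]
    rw [S_eq_range k hk n, sum_range_pow (n + 1) k, eval_finset_sum]
    refine Finset.sum_congr rfl fun i _ => ?_
    simp [div_mul_eq_mul_div]
  -- the recurrence as a polynomial identity
  have hrec : P.comp (X + 1) = P + (X + 1) ^ k := by
    apply eq_of_nat_eval
    intro n
    rw [eval_comp]
    simp only [eval_add, eval_X, eval_one, eval_pow]
    rw [show (n : ℚ) + 1 = ((n + 1 : ℕ) : ℚ) by push_cast; ring, hP (n + 1), hP n,
      S_succ]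
    push_cast; ring
  have hrec' : ∀ x : ℚ, P.eval (x + 1) = P.eval x + (x + 1) ^ k := by
    intro x
    have := congrArg (Polynomial.eval x) hrec
    simpa [eval_comp] using this
  -- symmetry about -1/2
  have hsymval : ∀ n : ℕ, P.eval (-1 - (n : ℚ)) = P.eval (n : ℚ) := by
    intro n
    induction n with
    | zero =>
      have h1 := hrec' (-1)
      simp only [neg_add_cancel, zero_pow hk.ne'] at h1
      simpa using h1.symm
    | succ n ih =>
      have h1 := hrec' (-2 - (n : ℚ))
      have h2 := hrec' (n : ℚ)
      rw [show (-2 - (n : ℚ) + 1) = -1 - (n : ℚ) by ring] at h1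
      have hneg : (-1 - (n : ℚ)) ^ k = -(((n : ℚ) + 1) ^ k) := by
        rw [show (-1 - (n : ℚ)) = -((n : ℚ) + 1) by ring, hodd.neg_pow]
      rw [ih, hneg] at h1
      push_cast
      rw [show (-1 - ((n : ℚ) + 1)) = -2 - (n : ℚ) by ring]
      linarith
  have hsym : P.comp (C (-1) - X) = P := by
    apply eq_of_nat_eval
    intro n
    rw [eval_comp]
    simpa using hsymval n
  -- Q(u) = P((u-1)/2) is even
  obtain ⟨Q, hQdef⟩ : ∃ Q : ℚ[X], Q = P.comp (C (1/2) * (X - 1)) := ⟨_, rfl⟩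
  have hsym' : ∀ x : ℚ, P.eval (-1 - x) = P.eval x := by
    intro x
    have := congrArg (Polynomial.eval x) hsym
    simpa [eval_comp] using this
  have hQeven : Q.comp (-X) = Q := by
    apply Polynomial.funext
    intro x
    rw [hQdef, eval_comp, eval_comp, eval_comp]
    simp only [eval_mul, eval_sub, eval_neg, eval_X, eval_one, eval_C]
    rw [show (1 / 2 : ℚ) * (-x - 1) = -1 - 1 / 2 * (x - 1) by ring]
    exact hsym' _
  obtain ⟨R, hR⟩ := exists_comp_sq Q hQeven
  refine ⟨R.comp (C 8 * X + 1), fun n => ?_⟩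
  have key : (R.comp (X ^ 2)).eval (2 * (n : ℚ) + 1) = S k n := by
    rw [← hR, hQdef, eval_comp]
    have harg : Polynomial.eval (2 * (n : ℚ) + 1) (C (1/2) * (X - 1)) = (n : ℚ) := by
      simp only [eval_mul, eval_sub, eval_C, eval_X, eval_one]
      ring
    rw [harg, hP n]
  rw [eval_comp] at key ⊢
  simp only [eval_add, eval_mul, eval_pow, eval_X, eval_one, eval_C] at key ⊢
  rw [S_one]
  rw [show (8 : ℚ) * ((n : ℚ) * ((n : ℚ) + 1) / 2) + 1 = (2 * (n : ℚ) + 1) ^ 2 by ring]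
  exact key.symm
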